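/- Let A, B, C, D ∈ ℝ^{n×n}, M = [[C, D],[A, −B]] ∈ ℝ^{2n×2n}, and suppose the pencil φ(z) = M + zMᵀ is regular. Let X ∈ ℂ^{n×n} and suppose there exist V ∈ ℂ^{2n×n} of rank n and A', B' ∈ ℂ^{n×n} such that M·[I; X] = V·A' and Mᵀ·[I; X] = V·B', where the pencil A' + zB' is regular with reciprocal-free spectrum. Then X is a solution of the ⊤-NARE, i.e., DX + XᵀA − XᵀBX + C = 0. -/

import Mathlib

/-! With `U = [I; X]` and `K = Uᵀ V`, the residual `R = Uᵀ M U = D X + Xᵀ A - Xᵀ B X + C`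
satisfies `K A' = R` and `K B' = Rᵀ`, so `K` solves the ⊤-Sylvester system
`K A' = B'ᵀ Kᵀ`, `K B' = A'ᵀ Kᵀ`. At a generic point `z`, where `N = A' + z B'` and
`P = B' + z A'` are invertible, this gives `K (P N⁻¹) = (Nᵀ P⁻ᵀ) K`. A common eigenvalue `μ` of
`P N⁻¹` and `Nᵀ P⁻ᵀ` would make both `(μ - z) A' + (μ z - 1) B'` and `(μ z - 1) A' + (μ - z) B'`
singular, which the reciprocal-free spectrum of `A' + z B'` excludes. So the two spectra are
disjoint, `K = 0`, and `R = K A' = 0`. -/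

open scoped Matrix

/-- A pencil `A + z B` of square complex matrices is regular
if `det (A + z B)` is not identically zero. -/
def PencilRegular {ι : Type*} [Fintype ι] [DecidableEq ι] (A B : Matrix ι ι ℂ) : Prop :=
  ∃ z : ℂ, (A + z • B).det ≠ 0

/-- The spectrum of the pencil `A + z B` is reciprocal-free: no pair of eigenvalues
`(z, w)` with `z w = 1`, and `0` and `∞` are not both eigenvalues. -/
def PencilReciprocalFree {ι : Type*} [Fintype ι] [DecidableEq ι]
    (A B : Matrix ι ι ℂ) : Prop :=
  (¬ ∃ z w : ℂ, z * w = 1 ∧ (A + z • B).det = 0 ∧ (A + w • B).det = 0) ∧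
    ¬ (A.det = 0 ∧ B.det = 0)

open Polynomial Filter

namespace Matrix

variable {ι 𝕜 : Type*} [Fintype ι] [DecidableEq ι]

theorem eval_det_map_C_add_X_smul {R : Type*} [CommRing R] (A B : Matrix ι ι R) (z : R) :
    ((A.map C + (X : R[X]) • B.map C).det).eval z = (A + z • B).det := by
  rw [← coe_evalRingHom, RingHom.map_det]
  congr 1
  ext i j
  simp only [RingHom.mapMatrix_apply, map_apply, add_apply, smul_apply, smul_eq_mul, map_add,
    coe_evalRingHom, eval_mul, eval_X, eval_C]

theorem eq_zero_of_semiconjBy_of_disjoint_spectrum [Field 𝕜] [IsAlgClosed 𝕜]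
    {K G H : Matrix ι ι 𝕜} (hK : SemiconjBy K G H)
    (hGH : Disjoint (spectrum 𝕜 G) (spectrum 𝕜 H)) : K = 0 := by
  nontriviality Matrix ι ι 𝕜
  have hK_aeval (p : 𝕜[X]) : K * aeval G p = aeval H p * K := by
    simp only [aeval_eq_sum_range, Finset.mul_sum, Finset.sum_mul, mul_smul_comm, smul_mul_assoc,
      (hK.pow_right _).eq]
  have hunit : IsUnit (aeval H G.charpoly) := by
    rw [← spectrum.zero_notMem_iff 𝕜, spectrum.map_polynomial_aeval_of_nonempty _ _
      (spectrum.nonempty_of_isAlgClosed_of_finiteDimensional 𝕜 H)]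
    rintro ⟨μ, hμH, hμG⟩
    exact hGH.notMem_of_mem_right hμH (mem_spectrum_iff_isRoot_charpoly.mpr hμG)
  rw [← hunit.mul_right_eq_zero, ← hK_aeval, aeval_self_charpoly, mul_zero]

theorem mem_spectrum_mul_inv_iff [Field 𝕜] {N P : Matrix ι ι 𝕜} (hN : IsUnit N.det) (μ : 𝕜) :
    μ ∈ spectrum 𝕜 (P * N⁻¹) ↔ (μ • N - P).det = 0 := by
  have h : (algebraMap 𝕜 _ μ - P * N⁻¹) * N = μ • N - P := by
    rw [sub_mul, Matrix.mul_assoc, nonsing_inv_mul _ hN, Matrix.mul_one,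
      Algebra.algebraMap_eq_smul_one, smul_mul_assoc, Matrix.one_mul]
  rw [spectrum.mem_iff, isUnit_iff_isUnit_det, isUnit_iff_ne_zero, not_not, ← h, det_mul,
    mul_eq_zero_iff_right hN.ne_zero]

theorem fromRows_one_transpose_mul_fromBlocks_mul_fromRows_one {R : Type*} [Ring R]
    (A B C D X : Matrix ι ι R) :
    (fromRows (1 : Matrix ι ι R) X)ᵀ * fromBlocks C D A (-B) * fromRows (1 : Matrix ι ι R) X =
      D * X + Xᵀ * A - Xᵀ * B * X + C := by
  rw [transpose_fromRows, transpose_one, Matrix.mul_assoc, fromBlocks_mul_fromRows,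
    fromCols_mul_fromRows]
  simp only [Matrix.one_mul, Matrix.mul_one, Matrix.mul_add, Matrix.neg_mul, Matrix.mul_neg,
    Matrix.mul_assoc]
  abel

end Matrix

open Matrix

variable {ι : Type*} [Fintype ι] [DecidableEq ι] {A B : Matrix ι ι ℂ}

theorem PencilRegular.eventually_det_ne_zero (h : PencilRegular A B) :
    ∀ᶠ z : ℂ in cofinite, (A + z • B).det ≠ 0 := by
  obtain ⟨z₀, hz₀⟩ := h
  have hp : (A.map C + (X : ℂ[X]) • B.map C).det ≠ 0 := fun hp =>
    hz₀ (by rw [← eval_det_map_C_add_X_smul, hp, eval_zero])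
  simpa [eventually_cofinite, eval_det_map_C_add_X_smul] using finite_setOfPred_isRoot hp

theorem PencilRegular.symm (h : PencilRegular A B) : PencilRegular B A := by
  obtain ⟨z, hz, hz0⟩ := (inv_injective.tendsto_cofinite.eventually h.eventually_det_ne_zero
    |>.and (eventually_cofinite_ne 0)).exists
  refine ⟨z, ?_⟩
  rw [show B + z • A = z • (A + z⁻¹ • B) by
    rw [smul_add, smul_smul, mul_inv_cancel₀ hz0, one_smul, add_comm], det_smul]
  exact mul_ne_zero (pow_ne_zero _ hz0) hz

theorem PencilReciprocalFree.eq_zero_of_det_eq_zero (h : PencilReciprocalFree A B) {α β : ℂ}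
    (h₁ : (α • A + β • B).det = 0) (h₂ : (β • A + α • B).det = 0) : α = 0 ∧ β = 0 := by
  by_contra hne
  rcases eq_or_ne α 0 with rfl | hα
  · have hβ : β ≠ 0 := fun hβ => hne ⟨rfl, hβ⟩
    exact h.2 ⟨by simpa [hβ] using h₂, by simpa [hβ] using h₁⟩
  rcases eq_or_ne β 0 with rfl | hβ
  · exact h.2 ⟨by simpa [hα] using h₁, by simpa [hα] using h₂⟩
  refine h.1 ⟨β / α, α / β, by field_simp, ?_, ?_⟩
  · rw [show α • A + β • B = α • (A + (β / α) • B) by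
      rw [smul_add, smul_smul, mul_div_cancel₀ _ hα]] at h₁
    rw [det_smul] at h₁
    exact (mul_eq_zero.mp h₁).resolve_left (pow_ne_zero _ hα)
  · rw [show β • A + α • B = β • (A + (α / β) • B) by
      rw [smul_add, smul_smul, mul_div_cancel₀ _ hβ]] at h₂
    rw [det_smul] at h₂
    exact (mul_eq_zero.mp h₂).resolve_left (pow_ne_zero _ hβ)

theorem PencilReciprocalFree.eq_zero_of_mul_eq_transpose_mul_transpose
    (hreg : PencilRegular A B) (hrf : PencilReciprocalFree A B) {K : Matrix ι ι ℂ}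
    (hA : K * A = Bᵀ * Kᵀ) (hB : K * B = Aᵀ * Kᵀ) : K = 0 := by
  -- `z ^ 2 ≠ 1` is what keeps the pair `(μ - z, μ * z - 1)` below away from `(0, 0)`.
  obtain ⟨z, ⟨⟨hN, hP⟩, hz1⟩, hzm1⟩ := (hreg.eventually_det_ne_zero.and
    hreg.symm.eventually_det_ne_zero |>.and (eventually_cofinite_ne 1)
    |>.and (eventually_cofinite_ne (-1))).exists
  set N := A + z • B
  set P := B + z • A
  have hKN : K * N = Pᵀ * Kᵀ := by
    simp only [N, P, Matrix.mul_add, Matrix.mul_smul, hA, hB, transpose_add, transpose_smul,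
      Matrix.add_mul, Matrix.smul_mul]
  have hKP : K * P = Nᵀ * Kᵀ := by
    simp only [N, P, Matrix.mul_add, Matrix.mul_smul, hA, hB, transpose_add, transpose_smul,
      Matrix.add_mul, Matrix.smul_mul]
  have hNu : IsUnit N.det := hN.isUnit
  have hPu : IsUnit Pᵀ.det := by rw [det_transpose]; exact hP.isUnit
  refine eq_zero_of_semiconjBy_of_disjoint_spectrum (G := P * N⁻¹) (H := Nᵀ * Pᵀ⁻¹) ?_ ?_
  · have hKt : Kᵀ = Pᵀ⁻¹ * (K * N) := by
      rw [hKN, ← Matrix.mul_assoc, nonsing_inv_mul _ hPu, Matrix.one_mul]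
    rw [SemiconjBy, ← Matrix.mul_assoc, hKP, hKt]
    simp only [Matrix.mul_assoc, mul_nonsing_inv _ hNu, Matrix.mul_one]
  · rw [Set.disjoint_left]
    intro μ hG hH
    rw [mem_spectrum_mul_inv_iff hNu] at hG
    rw [mem_spectrum_mul_inv_iff hPu, ← transpose_smul, ← transpose_sub, det_transpose] at hH
    obtain ⟨h₁, h₂⟩ := hrf.eq_zero_of_det_eq_zero (α := μ - z) (β := μ * z - 1)
      (by rw [← hG]; congr 1; simp only [N, P]; module)
      (by rw [← hH]; congr 1; simp only [N, P]; module)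
    have : (z - 1) * (z + 1) = 0 := by linear_combination h₂ - z * h₁
    rcases mul_eq_zero.mp this with h | h
    · exact hz1 (sub_eq_zero.mp h)
    · exact hzm1 (eq_neg_of_add_eq_zero_left h)

theorem transpose_mul_mul_eq_zero_of_deflating {κ : Type*} [Fintype κ] {M : Matrix κ κ ℂ}
    {U V : Matrix κ ι ℂ} (hA : M * U = V * A) (hB : Mᵀ * U = V * B)
    (hreg : PencilRegular A B) (hrf : PencilReciprocalFree A B) : Uᵀ * M * U = 0 := by
  have hKA : Uᵀ * V * A = Uᵀ * M * U := by rw [Matrix.mul_assoc, ← hA, Matrix.mul_assoc]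
  have hKB : Uᵀ * V * B = (Uᵀ * M * U)ᵀ := by
    rw [Matrix.mul_assoc, ← hB, transpose_mul, transpose_mul, transpose_transpose]
  have hK : Uᵀ * V = 0 := hrf.eq_zero_of_mul_eq_transpose_mul_transpose hreg
    (by rw [hKA, ← transpose_transpose (Uᵀ * M * U), ← hKB, transpose_mul])
    (by rw [hKB, ← hKA, transpose_mul])
  rw [← hKA, hK, Matrix.zero_mul]

/-- Theorem 2 of [BIMP]: if the pencil `φ(z) = M + z Mᵀ` associated with
`M = [[C, D], [A, −B]]` (viewed over ℂ) is regular and the columns of `[I; X]` span a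
deflating subspace of `φ(z)` associated with a reciprocal-free set of eigenvalues
(i.e. `M [I; X] = V A'`, `Mᵀ [I; X] = V B'` with `V` of rank n and `A' + z B'`
regular with reciprocal-free spectrum), then `X` solves the ⊤-NARE
`D X + Xᵀ A − Xᵀ B X + C = 0`. -/
theorem graph_deflating_subspace_gives_tNARE_solution
    (n : ℕ) (A B C D : Matrix (Fin n) (Fin n) ℝ) :
    ∀ Ac Bc Cc Dc : Matrix (Fin n) (Fin n) ℂ,
      Ac = A.map (Complex.ofReal ·) → Bc = B.map (Complex.ofReal ·) →
      Cc = C.map (Complex.ofReal ·) → Dc = D.map (Complex.ofReal ·) →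
      ∀ M : Matrix (Fin n ⊕ Fin n) (Fin n ⊕ Fin n) ℂ,
        M = Matrix.fromBlocks Cc Dc Ac (-Bc) →
        PencilRegular M Mᵀ →
        ∀ (X : Matrix (Fin n) (Fin n) ℂ)
          (V : Matrix (Fin n ⊕ Fin n) (Fin n) ℂ)
          (A' B' : Matrix (Fin n) (Fin n) ℂ),
          V.rank = n →
          M * Matrix.fromRows 1 X = V * A' →
          Mᵀ * Matrix.fromRows 1 X = V * B' →
          PencilRegular A' B' → PencilReciprocalFree A' B' →
          Dc * X + Xᵀ * Ac - Xᵀ * Bc * X + Cc = 0 := by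
  intro Ac Bc Cc Dc _ _ _ _ M hM _ X V A' B' _ hA' hB' hreg hrf
  have h := transpose_mul_mul_eq_zero_of_deflating hA' hB' hreg hrf
  rwa [hM, fromRows_one_transpose_mul_fromBlocks_mul_fromRows_one] at h
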